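/- arXiv:0909.1902 — 5 statements merged into one kernel-verified Lean document; each statement's English description precedes it below -/
import Mathlib

section
/- Let I ⊆ ℂ[z₁,…,z_m] be an ideal, w₀ ∈ ℂ^m, and J = 𝔪_{w₀} I where 𝔪_{w₀} is the maximal ideal at w₀. For w ≠ w₀, the characteristic spaces coincide: V_w(J) = V_w(I), where V_w(F) = {q ∈ ℂ[z] : q(D)f|_w = 0 for all f ∈ F}. -/
open MvPolynomial

/-- The Wirtinger partial derivative `∂f/∂z_i` of a function of `m` complex variables. -/
noncomputable def pderivFun {m : ℕ} (i : Fin m) (f : (Fin m → ℂ) → ℂ) : (Fin m → ℂ) → ℂ :=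
  fun z => fderiv ℂ f z (Pi.single i 1)

/-- The iterated derivative `∂^α f` for a multi-index `α`. -/
noncomputable def mderiv {m : ℕ} (α : Fin m → ℕ) (f : (Fin m → ℂ) → ℂ) : (Fin m → ℂ) → ℂ :=
  (List.finRange m).foldr (fun i g => (pderivFun i)^[α i] g) f

/-- The constant-coefficient differential operator `q(D) = Σ a_α ∂^α` associated to the
polynomial `q = Σ a_α z^α`. -/
noncomputable def applyDiff {m : ℕ} (q : MvPolynomial (Fin m) ℂ)
    (f : (Fin m → ℂ) → ℂ) : (Fin m → ℂ) → ℂ :=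
  fun z => ∑ α ∈ q.support, q.coeff α * mderiv (fun i => α i) f z

/-- The characteristic space at `w` of an ideal `I`:
`V_w(I) = {q : q(D)f|_w = 0 for all f ∈ I}`. -/
def charSpaceI {m : ℕ} (w : Fin m → ℂ) (I : Ideal (MvPolynomial (Fin m) ℂ)) :
    Set (MvPolynomial (Fin m) ℂ) :=
  {q | ∀ p ∈ I, applyDiff q (fun z => MvPolynomial.eval z p) w = 0}

/-! Choose `j` with `w j ≠ w₀ j`. Evaluating the identity
`q(D)((z_j - c) p) = (z_j - c) q(D)p + (∂q/∂z_j)(D) p` at `w` with `c = w j` shows that every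
characteristic space is stable under `∂/∂z_j`; with `c = w₀ j` and `p ∈ I`, so that
`(z_j - w₀ j) p ∈ 𝔪_{w₀} I`, it shows that for `q ∈ V_w(𝔪_{w₀} I)` the value `q(D)p|_w` vanishes
as soon as `(∂q/∂z_j)(D)p|_w` does. Since `∂/∂z_j` is nilpotent on each polynomial, induction
on the order of nilpotency gives `q ∈ V_w(I)`. All of this is computed on polynomials, since
`∂/∂z_i` of a polynomial function is the function of `pderiv i`. -/

open ContinuousLinearMap in
theorem MvPolynomial.hasFDerivAt_eval {𝕜 σ : Type*} [NontriviallyNormedField 𝕜] [Fintype σ]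
    (p : MvPolynomial σ 𝕜) (z : σ → 𝕜) :
    HasFDerivAt (𝕜 := 𝕜) (fun z => eval z p) (∑ i, eval z (pderiv i p) • proj i) z := by
  induction p using MvPolynomial.induction_on with
  | C a =>
      simp only [eval_C]
      refine (hasFDerivAt_const a z).congr_fderiv ?_
      ext v
      simp
  | add p q hp hq =>
      simp only [eval_add]
      refine (hp.add hq).congr_fderiv ?_
      ext v
      simp [add_mul, Finset.sum_add_distrib]
  | mul_X p i hp =>
      classical
      simp only [eval_mul, eval_X]
      refine (hp.mul (hasFDerivAt_apply i z)).congr_fderiv ?_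
      ext v
      simp [pderiv_X, Pi.single_apply, add_mul, Finset.sum_add_distrib, Finset.mul_sum,
        apply_ite (eval z), mul_assoc]

theorem pderivFun_eval {m : ℕ} (i : Fin m) (p : MvPolynomial (Fin m) ℂ) :
    pderivFun i (fun z => eval z p) = fun z => eval z (pderiv i p) := by
  classical
  funext z
  simp [pderivFun, (hasFDerivAt_eval p z).fderiv, Pi.single_apply]

theorem iterate_pderivFun_eval {m : ℕ} (i : Fin m) (n : ℕ) (p : MvPolynomial (Fin m) ℂ) :
    (pderivFun i)^[n] (fun z => eval z p) = fun z => eval z ((pderiv i)^[n] p) := by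
  induction n generalizing p with
  | zero => rfl
  | succ n ih => rw [Function.iterate_succ_apply, Function.iterate_succ_apply, pderivFun_eval, ih]

namespace MvPolynomial

theorem exists_iterate_pderiv_eq_zero {σ R : Type*} [CommSemiring R] (i : σ)
    (q : MvPolynomial σ R) : ∃ n, (pderiv i)^[n] q = 0 := by
  induction q using MvPolynomial.induction_on' with
  | monomial s a =>
      refine ⟨s i + 1, ?_⟩
      induction h : s i generalizing s a with
      | zero => simp [pderiv_monomial, h]
      | succ k ih =>
          rw [Function.iterate_succ_apply, pderiv_monomial, ih]
          simp [h]
  | add p q hp hq =>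
      obtain ⟨n₁, hn₁⟩ := hp
      obtain ⟨n₂, hn₂⟩ := hq
      refine ⟨n₂ + n₁, ?_⟩
      rw [iterate_map_add, Function.iterate_add_apply, hn₁, iterate_map_zero, add_comm n₂,
        Function.iterate_add_apply, hn₂, iterate_map_zero, add_zero]

variable {σ R : Type*} [CommRing R]

theorem iterate_pderiv_X_sub_C_mul_of_ne {i j : σ} (hij : i ≠ j) (c : R) (n : ℕ)
    (p : MvPolynomial σ R) :
    (pderiv i)^[n] ((X j - C c) * p) = (X j - C c) * (pderiv i)^[n] p := by
  induction n generalizing p with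
  | zero => rfl
  | succ n ih =>
      rw [Function.iterate_succ_apply, Function.iterate_succ_apply, pderiv_mul, map_sub,
        pderiv_X_of_ne hij.symm, pderiv_C, sub_zero, zero_mul, zero_add, ih]

-- At `n = 0` the truncated `n - 1` is harmless: its coefficient `n` vanishes.
theorem iterate_pderiv_X_sub_C_mul (j : σ) (c : R) (n : ℕ) (p : MvPolynomial σ R) :
    (pderiv j)^[n] ((X j - C c) * p)
      = (X j - C c) * (pderiv j)^[n] p + n • (pderiv j)^[n - 1] p := by
  induction n with
  | zero => simp
  | succ n ih =>
      have hstep : n • pderiv j ((pderiv j)^[n - 1] p) = n • (pderiv j)^[n] p := by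
        cases n <;> simp [Function.iterate_succ_apply']
      rw [Function.iterate_succ_apply', ih, map_add, pderiv_mul, map_sub, pderiv_X_self,
        pderiv_C, sub_zero, one_mul, map_nsmul, hstep, Function.iterate_succ_apply',
        Nat.add_sub_cancel, succ_nsmul]
      abel

theorem foldr_iterate_pderiv_X_sub_C_mul_of_notMem {l : List σ} {j : σ} (hj : j ∉ l)
    (α : σ → ℕ) (c : R) (p : MvPolynomial σ R) :
    l.foldr (fun i q => (pderiv i)^[α i] q) ((X j - C c) * p)
      = (X j - C c) * l.foldr (fun i q => (pderiv i)^[α i] q) p := by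
  induction l with
  | nil => rfl
  | cons i l ih =>
      rw [List.mem_cons, not_or] at hj
      rw [List.foldr_cons, List.foldr_cons, ih hj.2,
        iterate_pderiv_X_sub_C_mul_of_ne (Ne.symm hj.1)]

theorem foldr_iterate_pderiv_X_sub_C_mul [DecidableEq σ] {l : List σ} (hl : l.Nodup) {j : σ}
    (hj : j ∈ l) (α : σ → ℕ) (c : R) (p : MvPolynomial σ R) :
    l.foldr (fun i q => (pderiv i)^[α i] q) ((X j - C c) * p)
      = (X j - C c) * l.foldr (fun i q => (pderiv i)^[α i] q) p
        + α j • l.foldr (fun i q => (pderiv i)^[Function.update α j (α j - 1) i] q) p := by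
  induction l with
  | nil => simp at hj
  | cons i l ih =>
      obtain ⟨hil, hl⟩ := List.nodup_cons.mp hl
      simp only [List.foldr_cons]
      by_cases hij : i = j
      · subst hij
        have hupdate : l.foldr (fun k q => (pderiv k)^[Function.update α i (α i - 1) k] q) p
            = l.foldr (fun k q => (pderiv k)^[α k] q) p :=
          List.foldr_ext _ _ _ fun k hk _ => by
            rw [Function.update_of_ne (ne_of_mem_of_not_mem hk hil)]
        rw [foldr_iterate_pderiv_X_sub_C_mul_of_notMem hil, iterate_pderiv_X_sub_C_mul,
          Function.update_self, hupdate]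
      · rw [ih hl ((List.mem_cons.mp hj).resolve_left (Ne.symm hij)), iterate_map_add,
          iterate_pderiv_X_sub_C_mul_of_ne hij, iterate_map_nsmul, Function.update_of_ne hij]

end MvPolynomial

noncomputable def pderivIter {m : ℕ} {R : Type*} [CommSemiring R] (α : Fin m → ℕ)
    (p : MvPolynomial (Fin m) R) : MvPolynomial (Fin m) R :=
  (List.finRange m).foldr (fun i q => (pderiv i)^[α i] q) p

theorem mderiv_eval {m : ℕ} (α : Fin m → ℕ) (p : MvPolynomial (Fin m) ℂ) :
    mderiv α (fun z => eval z p) = fun z => eval z (pderivIter α p) := by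
  unfold mderiv pderivIter
  induction List.finRange m with
  | nil => rfl
  | cons i l ih => rw [List.foldr_cons, List.foldr_cons, ih, iterate_pderivFun_eval]

theorem pderivIter_X_sub_C_mul {m : ℕ} {R : Type*} [CommRing R] (α : Fin m → ℕ) (j : Fin m)
    (c : R) (p : MvPolynomial (Fin m) R) :
    pderivIter α ((X j - C c) * p)
      = (X j - C c) * pderivIter α p + α j • pderivIter (Function.update α j (α j - 1)) p :=
  foldr_iterate_pderiv_X_sub_C_mul (List.nodup_finRange m) (List.mem_finRange j) α c p

noncomputable def diffPairing {m : ℕ} (w : Fin m → ℂ) (q p : MvPolynomial (Fin m) ℂ) : ℂ :=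
  (AddMonoidAlgebra.coeff q).sum fun α a => a * eval w (pderivIter α p)

theorem applyDiff_eval {m : ℕ} (w : Fin m → ℂ) (q p : MvPolynomial (Fin m) ℂ) :
    applyDiff q (fun z => eval z p) w = diffPairing w q p := by
  simp [applyDiff, diffPairing, sum_def, mderiv_eval]

section diffPairing

variable {m : ℕ} (w : Fin m → ℂ)

@[simp]
theorem diffPairing_zero_left (p : MvPolynomial (Fin m) ℂ) : diffPairing w 0 p = 0 := by
  simp [diffPairing]

theorem diffPairing_add_left (q₁ q₂ p : MvPolynomial (Fin m) ℂ) :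
    diffPairing w (q₁ + q₂) p = diffPairing w q₁ p + diffPairing w q₂ p := by
  simp only [diffPairing, AddMonoidAlgebra.coeff_add]
  exact Finsupp.sum_add_index' (fun _ => zero_mul _) fun _ _ _ => add_mul _ _ _

theorem diffPairing_monomial (s : Fin m →₀ ℕ) (a : ℂ) (p : MvPolynomial (Fin m) ℂ) :
    diffPairing w (monomial s a) p = a * eval w (pderivIter s p) :=
  sum_monomial_eq (zero_mul _)

theorem diffPairing_X_sub_C_mul (q : MvPolynomial (Fin m) ℂ) (j : Fin m) (c : ℂ)
    (p : MvPolynomial (Fin m) ℂ) :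
    diffPairing w q ((X j - C c) * p)
      = (w j - c) * diffPairing w q p + diffPairing w (pderiv j q) p := by
  induction q using MvPolynomial.induction_on' with
  | add q₁ q₂ h₁ h₂ =>
      rw [map_add, diffPairing_add_left, diffPairing_add_left, diffPairing_add_left, h₁, h₂]
      ring
  | monomial s a =>
      have hs : ⇑(s - Finsupp.single j 1 : Fin m →₀ ℕ) = Function.update s j (s j - 1) := by
        ext i
        rcases eq_or_ne i j with rfl | hij <;> simp [*]
      rw [pderiv_monomial, diffPairing_monomial, diffPairing_monomial, diffPairing_monomial,
        pderivIter_X_sub_C_mul, hs]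
      simp only [eval_add, eval_mul, eval_sub, eval_X, eval_C, nsmul_eq_mul, map_natCast]
      ring

end diffPairing

section charSpaceI

variable {m : ℕ} {w : Fin m → ℂ}

theorem mem_charSpaceI_iff {I : Ideal (MvPolynomial (Fin m) ℂ)} {q : MvPolynomial (Fin m) ℂ} :
    q ∈ charSpaceI w I ↔ ∀ p ∈ I, diffPairing w q p = 0 := by
  simp only [charSpaceI, Set.mem_ofPred_eq, applyDiff_eval]

theorem charSpaceI_anti {I J : Ideal (MvPolynomial (Fin m) ℂ)} (h : J ≤ I) :
    charSpaceI w I ⊆ charSpaceI w J :=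
  fun _ hq p hp => hq p (h hp)

theorem pderiv_mem_charSpaceI {J : Ideal (MvPolynomial (Fin m) ℂ)} {q : MvPolynomial (Fin m) ℂ}
    (j : Fin m) (hq : q ∈ charSpaceI w J) : pderiv j q ∈ charSpaceI w J := by
  rw [mem_charSpaceI_iff] at hq ⊢
  intro p hp
  have h := hq _ (J.mul_mem_left (X j - C (w j)) hp)
  rwa [diffPairing_X_sub_C_mul, sub_self, zero_mul, zero_add] at h

theorem mem_charSpaceI_of_mem_charSpaceI_mul {K I : Ideal (MvPolynomial (Fin m) ℂ)} {j : Fin m}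
    {c : ℂ} (hK : X j - C c ∈ K) (hc : w j ≠ c) {q : MvPolynomial (Fin m) ℂ}
    (hq : q ∈ charSpaceI w (K * I)) {n : ℕ} (hn : (pderiv j)^[n] q = 0) :
    q ∈ charSpaceI w I := by
  induction n generalizing q with
  | zero =>
      rw [Function.iterate_zero_apply] at hn
      simp [mem_charSpaceI_iff, hn]
  | succ n ih =>
      have hderiv := mem_charSpaceI_iff.mp (ih (pderiv_mem_charSpaceI j hq) hn)
      rw [mem_charSpaceI_iff] at hq ⊢
      intro p hp
      have h := hq _ (Ideal.mul_mem_mul hK hp)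
      rw [diffPairing_X_sub_C_mul, hderiv p hp, add_zero] at h
      exact (mul_eq_zero.mp h).resolve_left (sub_ne_zero.mpr hc)

end charSpaceI

/-- For an ideal `I ⊆ ℂ[z₁,…,z_m]`, a point `w₀`, and
`J = 𝔪_{w₀} I`, the characteristic spaces at any point `w ≠ w₀` coincide:
`V_w(J) = V_w(I)`. -/
theorem stmt5 {m : ℕ} (I : Ideal (MvPolynomial (Fin m) ℂ)) (w₀ w : Fin m → ℂ)
    (hw : w ≠ w₀) :
    charSpaceI w (RingHom.ker (MvPolynomial.eval w₀ :
        MvPolynomial (Fin m) ℂ →+* ℂ) * I) =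
      charSpaceI w I := by
  obtain ⟨j, hj⟩ := Function.ne_iff.mp hw
  have hX : X j - C (w₀ j) ∈ RingHom.ker (eval w₀) := by simp [RingHom.mem_ker]
  refine Set.Subset.antisymm (fun q hq => ?_) (charSpaceI_anti Ideal.mul_le_right)
  obtain ⟨n, hn⟩ := exists_iterate_pderiv_eq_zero j q
  exact mem_charSpaceI_of_mem_charSpaceI_mul hX hj hq hn
end

section
/- Let M be a reproducing kernel Hilbert space of holomorphic functions on Ω with orthonormal basis {e_n}, reproducing kernel K. For any closed polydisk Δ̄(0;r) ⊂ Ω, the series Σ_n ‖e_n‖²_{Δ̄(0;r)} of squared sup-norms converges. (This follows from the sup–L² estimate and the fact that G(z) = Σ_n |e_n(z)|² = K(z,z) is finite and continuous on Δ̄(0;r), together with monotone convergence.) -/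
open MeasureTheory

/-- The closed polydisk of polyradius `r` centered at `0` in `ℂ^m`. -/
def closedPolydisk (m : ℕ) (r : ℝ) : Set (Fin m → ℂ) := {z | ∀ i, ‖z i‖ ≤ r}

/-!
Integrating the circle mean value property of `f ^ 2` in polar coordinates and then coordinate by
coordinate gives the sub-mean value inequality `(π δ²)ᵐ |f z|² ≤ ∫_{Δ̄(z;δ)} |f|²` for `f`
holomorphic near a closed polydisk. Let `Q ⊆ Ω` be the compact `δ`-thickening of `Δ̄(0;r)`.
Every `f ∈ 𝓜` is bounded on `Q`, so by uniform boundedness `‖K w‖ ≤ C` for `w ∈ Q`, and Bessel's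
inequality gives `Σₙ |eₙ(w)|² = Σₙ |⟪eₙ, K w⟫|² ≤ C²` there. Hence
`Σₙ sup_{Δ̄(0;r)} |eₙ|² ≤ (π δ²)⁻ᵐ ∫_Q Σₙ |eₙ|² ≤ (π δ²)⁻ᵐ C² vol Q`.
-/

open Set Metric Real
open scoped ENNReal

theorem ofReal_two_pi_mul_enorm_sq_le_setLIntegral_circleMap {g : ℂ → ℂ} {c : ℂ} {ρ : ℝ}
    (hρ : 0 ≤ ρ) (hg : DifferentiableOn ℂ g (closedBall c ρ)) :
    ENNReal.ofReal (2 * π) * ‖g c‖ₑ ^ 2 ≤ ∫⁻ θ in Ioo (-π) π, ‖g (circleMap c ρ θ)‖ₑ ^ 2 := by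
  have hmean : circleAverage (g ^ 2) c ρ = g c ^ 2 := by
    rw [← abs_of_nonneg hρ] at hg
    exact ((hg.pow 2).diffContOnCl_ball subset_rfl).circleAverage
  have hint : (2 * π : ℂ) * g c ^ 2 = ∫ θ in Ioc (-π) π, g (circleMap c ρ θ) ^ 2 := by
    rw [← hmean, circleAverage_eq_integral_add (-π),
      intervalIntegral.integral_comp_add_right (fun θ => (g ^ 2) (circleMap c ρ θ)),
      ← intervalIntegral.integral_of_le (by linarith [pi_pos]), Complex.real_smul]
    simp only [Pi.pow_apply]
    push_cast
    field_simp
    ring_nf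
  calc ENNReal.ofReal (2 * π) * ‖g c‖ₑ ^ 2 = ‖(2 * π : ℂ) * g c ^ 2‖ₑ := by
        rw [enorm_mul, enorm_pow]
        congr 1
        rw [← Complex.ofReal_ofNat, ← Complex.ofReal_mul, ← ofReal_norm, Complex.norm_real,
          Real.norm_of_nonneg (by positivity)]
    _ ≤ ∫⁻ θ in Ioc (-π) π, ‖g (circleMap c ρ θ) ^ 2‖ₑ :=
        hint ▸ enorm_integral_le_lintegral_enorm _
    _ = ∫⁻ θ in Ioo (-π) π, ‖g (circleMap c ρ θ)‖ₑ ^ 2 := by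
        rw [Measure.restrict_congr_set Ioo_ae_eq_Ioc]
        simp only [enorm_pow]

theorem ContinuousOn.measurable_indicator {α γ : Type*} [MeasurableSpace α] [TopologicalSpace α]
    [OpensMeasurableSpace α] [TopologicalSpace γ] [MeasurableSpace γ] [BorelSpace γ] [Zero γ]
    {f : α → γ} {s : Set α} (hf : ContinuousOn f s) (hs : MeasurableSet s) :
    Measurable (s.indicator f) := by
  classical
  rw [← piecewise_eq_indicator]
  exact hf.measurable_piecewise continuousOn_const hs

theorem circleMap_eq_add_polarCoord_symm (c : ℂ) (p : ℝ × ℝ) :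
    circleMap c p.1 p.2 = c + Complex.polarCoord.symm p := by
  rw [Complex.polarCoord_symm_apply, circleMap, Complex.exp_mul_I]
  push_cast
  ring

theorem setLIntegral_Ioo_ofReal {δ : ℝ} (hδ : 0 ≤ δ) :
    ∫⁻ ρ in Ioo 0 δ, ENNReal.ofReal ρ = ENNReal.ofReal (δ ^ 2 / 2) := by
  rw [Measure.restrict_congr_set Ioo_ae_eq_Ioc, ← ofReal_integral_eq_lintegral_ofReal
    (f := fun ρ => ρ) (continuous_id.integrableOn_Ioc (a := 0) (b := δ))
    ((ae_restrict_iff' measurableSet_Ioc).2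
      (.of_forall fun x hx => hx.1.le)), ← intervalIntegral.integral_of_le hδ, integral_id]
  ring_nf

theorem ofReal_pi_mul_sq_mul_enorm_sq_le_setLIntegral_closedBall {g : ℂ → ℂ} {c : ℂ} {δ : ℝ}
    (hδ : 0 ≤ δ) (hg : DifferentiableOn ℂ g (closedBall c δ)) :
    ENNReal.ofReal (π * δ ^ 2) * ‖g c‖ₑ ^ 2 ≤ ∫⁻ x in closedBall c δ, ‖g x‖ₑ ^ 2 := by
  set W := (closedBall c δ).indicator fun x => ‖g x‖ₑ ^ 2
  have hW : Measurable W := ((ENNReal.continuous_pow 2).comp_continuousOn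
    hg.continuousOn.enorm).measurable_indicator measurableSet_closedBall
  have hWcircle : ∀ p ∈ Ioo 0 δ ×ˢ Ioo (-π) π,
      W (c + Complex.polarCoord.symm p) = ‖g (circleMap c p.1 p.2)‖ₑ ^ 2 := fun p hp => by
    rw [← circleMap_eq_add_polarCoord_symm]
    exact indicator_of_mem (closedBall_subset_closedBall hp.1.2.le
      (circleMap_mem_closedBall c hp.1.1.le p.2)) _
  have hsub : Ioo 0 δ ×ˢ Ioo (-π) π ⊆ polarCoord.target :=
    prod_mono Ioo_subset_Ioi_self subset_rfl
  calc ENNReal.ofReal (π * δ ^ 2) * ‖g c‖ₑ ^ 2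
      = ∫⁻ ρ in Ioo 0 δ, ENNReal.ofReal ρ * (ENNReal.ofReal (2 * π) * ‖g c‖ₑ ^ 2) := by
        rw [lintegral_mul_const' _ _ (by finiteness), setLIntegral_Ioo_ofReal hδ, ← mul_assoc,
          ← ENNReal.ofReal_mul (by positivity)]
        ring_nf
    _ ≤ ∫⁻ ρ in Ioo 0 δ, ∫⁻ θ in Ioo (-π) π,
          ENNReal.ofReal ρ * ‖g (circleMap c ρ θ)‖ₑ ^ 2 := by
        refine setLIntegral_mono' measurableSet_Ioo fun ρ hρ => ?_
        rw [lintegral_const_mul' _ _ ENNReal.ofReal_ne_top]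
        gcongr
        exact ofReal_two_pi_mul_enorm_sq_le_setLIntegral_circleMap hρ.1.le
          (hg.mono (closedBall_subset_closedBall hρ.2.le))
    _ = ∫⁻ p in Ioo 0 δ ×ˢ Ioo (-π) π,
          ENNReal.ofReal p.1 • W (c + Complex.polarCoord.symm p) := by
        have hpolar : Continuous fun p : ℝ × ℝ => Complex.polarCoord.symm p := by
          simp only [Complex.polarCoord_symm_apply]
          fun_prop
        rw [Measure.volume_eq_prod, setLIntegral_prod _ (by fun_prop)]
        refine setLIntegral_congr_fun measurableSet_Ioo fun ρ hρ => ?_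
        refine setLIntegral_congr_fun measurableSet_Ioo fun θ hθ => ?_
        rw [hWcircle (ρ, θ) ⟨hρ, hθ⟩, smul_eq_mul]
    _ ≤ ∫⁻ p in polarCoord.target, ENNReal.ofReal p.1 • W (c + Complex.polarCoord.symm p) :=
        lintegral_mono_set hsub
    _ = ∫⁻ x in closedBall c δ, ‖g x‖ₑ ^ 2 := by
        rw [Complex.lintegral_comp_polarCoord_symm (fun x => W (c + x)),
          lintegral_add_left_eq_self, lintegral_indicator measurableSet_closedBall]

theorem prod_mul_le_setLIntegral_univ_pi {ι : Type*} [Fintype ι] [DecidableEq ι]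
    {X : ι → Type*} [∀ i, MeasurableSpace (X i)] {μ : ∀ i, Measure (X i)}
    [∀ i, SigmaFinite (μ i)] {A : ∀ i, Set (X i)} (hA : ∀ i, MeasurableSet (A i))
    {F : (∀ i, X i) → ℝ≥0∞} (hF : Measurable F) {c : ι → ℝ≥0∞} {z : ∀ i, X i}
    (hz : z ∈ univ.pi A)
    (hmean : ∀ y ∈ univ.pi A, ∀ i, y i = z i →
      c i * F y ≤ ∫⁻ x in A i, F (Function.update y i x) ∂μ i) :
    (∏ i, c i) * F z ≤ ∫⁻ x in univ.pi A, F x ∂Measure.pi μ := by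
  set G := (univ.pi A).indicator F
  have hG : Measurable G := hF.indicator (MeasurableSet.univ_pi hA)
  suffices key : ∀ s : Finset ι, ∀ y ∈ univ.pi A, (∀ i ∈ s, y i = z i) →
      (∏ i ∈ s, c i) * F y ≤ (∫⋯∫⁻_s, G ∂μ) y by
    rw [← lintegral_indicator (MeasurableSet.univ_pi hA), lintegral_eq_lmarginal_univ z]
    exact key Finset.univ z hz fun i _ => rfl
  intro s
  induction s using Finset.induction_on with
  | empty => intro y hy _; simp [G, indicator_of_mem hy]
  | @insert i s hi ih =>
    intro y hy hyz
    have hupdate : ∀ x ∈ A i, Function.update y i x ∈ univ.pi A := fun x hx =>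
      (update_mem_pi_iff_of_mem hy).2 fun _ => hx
    calc (∏ j ∈ insert i s, c j) * F y = (∏ j ∈ s, c j) * (c i * F y) := by
          rw [Finset.prod_insert hi]; ring
      _ ≤ (∏ j ∈ s, c j) * ∫⁻ x in A i, F (Function.update y i x) ∂μ i := by
          gcongr
          exact hmean y hy i (hyz i (Finset.mem_insert_self i s))
      _ ≤ ∫⁻ x in A i, (∏ j ∈ s, c j) * F (Function.update y i x) ∂μ i :=
          lintegral_const_mul_le _ _
      _ ≤ ∫⁻ x in A i, (∫⋯∫⁻_s, G ∂μ) (Function.update y i x) ∂μ i := by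
          refine setLIntegral_mono' (hA i) fun x hx => ih _ (hupdate x hx) fun j hj => ?_
          rw [Function.update_of_ne (ne_of_mem_of_not_mem hj hi)]
          exact hyz j (Finset.mem_insert_of_mem hj)
      _ ≤ (∫⋯∫⁻_insert i s, G ∂μ) y := by
          rw [lmarginal_insert _ hG hi]
          exact setLIntegral_le_lintegral _ _

theorem ofReal_pi_mul_sq_pow_mul_enorm_sq_le_setLIntegral_closedBall {ι : Type*} [Fintype ι]
    {f : (ι → ℂ) → ℂ} {z : ι → ℂ} {δ : ℝ} (hδ : 0 ≤ δ)
    (hf : DifferentiableOn ℂ f (closedBall z δ)) :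
    ENNReal.ofReal (π * δ ^ 2) ^ Fintype.card ι * ‖f z‖ₑ ^ 2
      ≤ ∫⁻ w in closedBall z δ, ‖f w‖ₑ ^ 2 := by
  classical
  rw [closedBall_pi z hδ] at hf ⊢
  set P := univ.pi fun i => closedBall (z i) δ
  have hP : MeasurableSet P := MeasurableSet.univ_pi fun _ => measurableSet_closedBall
  have hzP : z ∈ P := fun i _ => mem_closedBall_self hδ
  have hF : Measurable (P.indicator fun w => ‖f w‖ₑ ^ 2) :=
    ((ENNReal.continuous_pow 2).comp_continuousOn hf.continuousOn.enorm).measurable_indicator hP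
  have key := prod_mul_le_setLIntegral_univ_pi (μ := fun _ => volume)
    (fun _ => measurableSet_closedBall) hF (c := fun _ => ENNReal.ofReal (π * δ ^ 2)) hzP
    fun y hy i hyi => by
      have hupdate : ∀ x ∈ closedBall (y i) δ, Function.update y i x ∈ P := fun x hx =>
        (update_mem_pi_iff_of_mem hy).2 fun _ => hyi ▸ hx
      have hslice := ofReal_pi_mul_sq_mul_enorm_sq_le_setLIntegral_closedBall hδ
        (hf.comp (fun x _ => (hasFDerivAt_update y x).differentiableAt.differentiableWithinAt)
          hupdate)
      rw [Function.comp_apply, Function.update_eq_self, hyi] at hslice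
      rw [indicator_of_mem hy]
      refine hslice.trans_eq (setLIntegral_congr_fun measurableSet_closedBall fun x hx => ?_)
      rw [indicator_of_mem (hupdate x (hyi ▸ hx)), Function.comp_apply]
  rw [Finset.prod_const, Finset.card_univ, indicator_of_mem hzP, ← volume_pi] at key
  refine key.trans_eq (setLIntegral_congr_fun hP fun w hw => indicator_of_mem hw _)

theorem exists_norm_le_of_forall_exists_norm_inner_le {𝕜 E ι : Type*} [RCLike 𝕜]
    [NormedAddCommGroup E] [InnerProductSpace 𝕜 E] [CompleteSpace E] {v : ι → E}
    (h : ∀ x, ∃ C, ∀ i, ‖inner 𝕜 x (v i)‖ ≤ C) : ∃ C, ∀ i, ‖v i‖ ≤ C := by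
  obtain ⟨C, hC⟩ := banach_steinhaus (g := fun i => innerSL 𝕜 (v i)) fun x =>
    (h x).imp fun C hC i => by rw [innerSL_apply_apply, norm_inner_symm]; exact hC i
  exact ⟨C, fun i => by simpa only [innerSL_apply_norm] using hC i⟩

theorem Orthonormal.tsum_enorm_inner_sq_le {𝕜 E ι : Type*} [RCLike 𝕜] [NormedAddCommGroup E]
    [InnerProductSpace 𝕜 E] {v : ι → E} (hv : Orthonormal 𝕜 v) (x : E) :
    ∑' i, ‖inner 𝕜 (v i) x‖ₑ ^ 2 ≤ ‖x‖ₑ ^ 2 := by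
  simp_rw [← ofReal_norm, ← ENNReal.ofReal_pow (norm_nonneg _)]
  rw [← ENNReal.ofReal_tsum_of_nonneg (fun _ => by positivity) (hv.inner_products_summable x)]
  exact ENNReal.ofReal_le_ofReal (hv.tsum_inner_products_le x)

theorem ofReal_sq_sSup_image_norm_le {X E : Type*} [SeminormedAddCommGroup E] {f : X → E}
    {D : Set X} {a : ℝ≥0∞} (h : ∀ z ∈ D, ‖f z‖ₑ ^ 2 ≤ a) :
    ENNReal.ofReal (sSup ((fun z => ‖f z‖) '' D) ^ 2) ≤ a := by
  rcases eq_or_ne a ⊤ with rfl | ha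
  · exact le_top
  have hbound : ∀ z ∈ D, ‖f z‖ ≤ √a.toReal := fun z hz => by
    refine Real.le_sqrt_of_sq_le ((ENNReal.ofReal_le_iff_le_toReal ha).1 ?_)
    rw [ENNReal.ofReal_pow (norm_nonneg _), ofReal_norm]
    exact h z hz
  have hsup : sSup ((fun z => ‖f z‖) '' D) ≤ √a.toReal :=
    Real.sSup_le (forall_mem_image.2 hbound) (Real.sqrt_nonneg _)
  have hnonneg : 0 ≤ sSup ((fun z => ‖f z‖) '' D) :=
    Real.sSup_nonneg (forall_mem_image.2 fun z _ => norm_nonneg _)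
  rw [ENNReal.ofReal_le_iff_le_toReal ha, ← Real.sq_sqrt ENNReal.toReal_nonneg]
  exact pow_le_pow_left₀ hnonneg hsup 2

theorem summable_sq_sSup_image_norm_of_mul_le_setLIntegral {ι X E : Type*} [Countable ι]
    [MeasurableSpace X] [NormedAddCommGroup E] {μ : Measure X} {f : ι → X → E} {D Q : Set X}
    {c B : ℝ≥0∞} (hc₀ : c ≠ 0) (hc : c ≠ ⊤) (hB : B ≠ ⊤) (hQ : MeasurableSet Q)
    (hμQ : μ Q ≠ ⊤)
    (hf : ∀ n, AEStronglyMeasurable (f n) (μ.restrict Q))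
    (hmean : ∀ n, ∀ z ∈ D, c * ‖f n z‖ₑ ^ 2 ≤ ∫⁻ w in Q, ‖f n w‖ₑ ^ 2 ∂μ)
    (hsum : ∀ w ∈ Q, ∑' n, ‖f n w‖ₑ ^ 2 ≤ B) :
    Summable fun n => sSup ((fun z => ‖f n z‖) '' D) ^ 2 := by
  have hbound : ∑' n, ENNReal.ofReal (sSup ((fun z => ‖f n z‖) '' D) ^ 2)
      ≤ c⁻¹ * (B * μ Q) := calc
    _ ≤ ∑' n, c⁻¹ * ∫⁻ w in Q, ‖f n w‖ₑ ^ 2 ∂μ := ENNReal.tsum_le_tsum fun n =>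
        ofReal_sq_sSup_image_norm_le fun z hz =>
          (ENNReal.mul_le_iff_le_inv hc₀ hc).1 (hmean n z hz)
    _ = c⁻¹ * ∫⁻ w in Q, ∑' n, ‖f n w‖ₑ ^ 2 ∂μ := by
        rw [ENNReal.tsum_mul_left, lintegral_tsum fun n => ((hf n).enorm).pow_const 2]
    _ ≤ c⁻¹ * ∫⁻ _ in Q, B ∂μ := by gcongr c⁻¹ * ?_; exact setLIntegral_mono' hQ hsum
    _ = c⁻¹ * (B * μ Q) := by rw [setLIntegral_const]
  have hfinite : ∑' n, ENNReal.ofReal (sSup ((fun z => ‖f n z‖) '' D) ^ 2) ≠ ⊤ :=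
    ne_top_of_le_ne_top (by finiteness) hbound
  simpa only [ENNReal.toReal_ofReal (sq_nonneg _)] using ENNReal.summable_toReal hfinite

theorem isCompact_closedPolydisk (m : ℕ) (r : ℝ) : IsCompact (closedPolydisk m r) := by
  convert isCompact_univ_pi fun _ : Fin m => isCompact_closedBall (0 : ℂ) r
  ext z
  simp [closedPolydisk]

theorem stmt8_general {m : ℕ} (Ω : Set ((Fin m) → ℂ)) (hΩopen : IsOpen Ω)
    (𝓜 : Type*) [NormedAddCommGroup 𝓜] [InnerProductSpace ℂ 𝓜] [CompleteSpace 𝓜]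
    -- realization of 𝓜 as a space of holomorphic functions on Ω
    (ev : 𝓜 →ₗ[ℂ] ((Fin m → ℂ) → ℂ))
    (hhol : ∀ f : 𝓜, DifferentiableOn ℂ (ev f) Ω)
    -- the reproducing kernel of 𝓜
    (K : (Fin m → ℂ) → 𝓜)
    (hrep : ∀ (f : 𝓜) (w : Fin m → ℂ), w ∈ Ω → ev f w = inner ℂ f (K w))
    -- an orthonormal basis (e_n) of 𝓜
    (e : HilbertBasis ℕ ℂ 𝓜)
    (r : ℝ) (hsub : closedPolydisk m r ⊆ Ω) :
    Summable (fun n : ℕ =>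
      (sSup ((fun z => ‖ev (e n) z‖) '' closedPolydisk m r)) ^ 2) := by
  obtain ⟨δ, hδ, hQΩ⟩ :=
    (isCompact_closedPolydisk m r).exists_cthickening_subset_open hΩopen hsub
  set Q := cthickening δ (closedPolydisk m r)
  have hQ : IsCompact Q := (isCompact_closedPolydisk m r).cthickening
  obtain ⟨C, hC⟩ : ∃ C, ∀ w : Q, ‖K w‖ ≤ C :=
    exists_norm_le_of_forall_exists_norm_inner_le fun f => by
      obtain ⟨C, hC⟩ := hQ.exists_bound_of_continuousOn ((hhol f).continuousOn.mono hQΩ)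
      exact ⟨C, fun w => hrep f w (hQΩ w.2) ▸ hC w w.2⟩
  refine summable_sq_sSup_image_norm_of_mul_le_setLIntegral
    (μ := volume) (c := ENNReal.ofReal (π * δ ^ 2) ^ m) (B := ENNReal.ofReal C ^ 2)
    (by positivity) (by finiteness) (by finiteness) hQ.isClosed.measurableSet hQ.measure_lt_top.ne
    (fun n => ((hhol (e n)).continuousOn.mono hQΩ).aestronglyMeasurable hQ.isClosed.measurableSet)
    (fun n z hz => ?_) (fun w hw => ?_)
  · have hball : closedBall z δ ⊆ Q := closedBall_subset_cthickening hz δ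
    simpa using (ofReal_pi_mul_sq_pow_mul_enorm_sq_le_setLIntegral_closedBall hδ.le
      ((hhol (e n)).mono (hball.trans hQΩ))).trans (lintegral_mono_set hball)
  · calc ∑' n, ‖ev (e n) w‖ₑ ^ 2 = ∑' n, ‖inner ℂ (e n) (K w)‖ₑ ^ 2 := by
          simp only [hrep _ w (hQΩ hw)]
      _ ≤ ‖K w‖ₑ ^ 2 := e.orthonormal.tsum_enorm_inner_sq_le (K w)
      _ ≤ ENNReal.ofReal C ^ 2 := by
          rw [← ofReal_norm]
          gcongr
          exact hC ⟨w, hw⟩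

/-- Let `𝓜` be a reproducing kernel Hilbert space of holomorphic
functions on `Ω` with orthonormal basis `{e_n}`.  For any closed polydisk
`Δ̄(0;r) ⊂ Ω`, the series `Σ_n ‖e_n‖²_{Δ̄(0;r)}` of squared sup-norms converges. -/
theorem stmt8 {m : ℕ} (Ω : Set ((Fin m) → ℂ)) (hΩopen : IsOpen Ω)
    (hΩbdd : Bornology.IsBounded Ω)
    (𝓜 : Type*) [NormedAddCommGroup 𝓜] [InnerProductSpace ℂ 𝓜] [CompleteSpace 𝓜]
    -- realization of 𝓜 as a space of holomorphic functions on Ω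
    (ev : 𝓜 →ₗ[ℂ] ((Fin m → ℂ) → ℂ))
    (hev_inj : Function.Injective ev)
    (hhol : ∀ f : 𝓜, DifferentiableOn ℂ (ev f) Ω)
    -- the reproducing kernel of 𝓜
    (K : (Fin m → ℂ) → 𝓜)
    (hrep : ∀ (f : 𝓜) (w : Fin m → ℂ), w ∈ Ω → ev f w = inner ℂ f (K w))
    -- an orthonormal basis (e_n) of 𝓜
    (e : HilbertBasis ℕ ℂ 𝓜)
    (r : ℝ) (hr : 0 < r) (hsub : closedPolydisk m r ⊆ Ω) :
    Summable (fun n : ℕ =>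
      (sSup ((fun z => ‖ev (e n) z‖) '' closedPolydisk m r)) ^ 2) :=
  stmt8_general Ω hΩopen 𝓜 ev hhol K hrep e r hsub
end

section
/- In the Hilbert space H₀^{(λ,μ)}(𝔻²) with orthogonal monomial basis as above, the joint kernel ker M₁* ∩ ker M₂* of the adjoints of the two coordinate multiplications is the two-dimensional span of z₁ and z₂. -/
/-- `wt a n = n! / (a(a+1)⋯(a+n−1))`, the squared norm of `z^n` in the weighted
space with kernel `(1 − z w̄)^{−a}`. -/
noncomputable def wt (a : ℝ) (n : ℕ) : ℝ :=
  (n.factorial : ℝ) / ∏ i ∈ Finset.range n, (a + i)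

/-!
The joint kernel of `M₁*` and `M₂*` is `(ran M₁ + ran M₂)ᗮ`, and the ranges contain every
monomial of degree at least two. These monomials are orthogonal to `z₁` and `z₂` and, together
with them, span a dense subspace; hence the orthogonal complement of their span is exactly
`span {z₁, z₂}`.
-/

namespace Submodule

variable {𝕜 E : Type*} [RCLike 𝕜] [NormedAddCommGroup E] [InnerProductSpace 𝕜 E]

theorem orthogonal_eq_of_isOrtho_of_dense_sup [CompleteSpace E] {K W : Submodule 𝕜 E}
    [K.HasOrthogonalProjection] (hKW : K ⟂ W) (hdense : Dense ((K ⊔ W : Submodule 𝕜 E) : Set E)) :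
    Wᗮ = K := by
  have hbot : (K ⊔ W)ᗮ = ⊥ :=
    topologicalClosure_eq_top_iff.mp (dense_iff_topologicalClosure_eq_top.mp hdense)
  calc Wᗮ = K ⊔ Kᗮ ⊓ Wᗮ := (sup_orthogonal_inf_of_hasOrthogonalProjection hKW.le).symm
    _ = K := by rw [inf_orthogonal, hbot, sup_bot_eq]

end Submodule

theorem ContinuousLinearMap.ker_adjoint_inf_ker_adjoint {𝕜 E F : Type*} [RCLike 𝕜]
    [NormedAddCommGroup E] [InnerProductSpace 𝕜 E] [CompleteSpace E]
    [NormedAddCommGroup F] [InnerProductSpace 𝕜 F] [CompleteSpace F] (A B : E →L[𝕜] F) :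
    LinearMap.ker (adjoint A : F →ₗ[𝕜] E) ⊓ LinearMap.ker (adjoint B : F →ₗ[𝕜] E) =
      (LinearMap.range (A : E →ₗ[𝕜] F) ⊔ LinearMap.range (B : E →ₗ[𝕜] F))ᗮ := by
  rw [← Submodule.inf_orthogonal]
  exact congr_arg₂ (· ⊓ ·) (A.orthogonal_range).symm (B.orthogonal_range).symm

theorem setOf_ne_zero_eq_pair_union_two_le :
    {p : ℕ × ℕ | p ≠ (0, 0)} = {(1, 0), (0, 1)} ∪ {p | 2 ≤ p.1 + p.2} := by
  ext ⟨m, n⟩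
  simp only [Set.mem_ofPred_eq, Set.mem_union, Set.mem_insert_iff, Set.mem_singleton_iff,
    ne_eq, Prod.mk.injEq]
  omega

theorem stmt10_general (lam mu : ℝ)
    (H : Type*) [NormedAddCommGroup H] [InnerProductSpace ℂ H] [CompleteSpace H]
    -- v (m,n) represents the monomial z₁^m z₂^n, for (m,n) ≠ (0,0)
    (v : ℕ × ℕ → H)
    (horth : ∀ p q : ℕ × ℕ, p ≠ (0,0) → q ≠ (0,0) → p ≠ q →
      (inner ℂ (v p) (v q) : ℂ) = 0)
    (hdense : Dense ((Submodule.span ℂ (v '' {p | p ≠ (0,0)}) : Submodule ℂ H) : Set H))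
    -- M₁, M₂ are the multiplications by z₁, z₂
    (M₁ M₂ : H →L[ℂ] H)
    (hM₁ : ∀ p : ℕ × ℕ, p ≠ (0,0) → M₁ (v p) = v (p.1 + 1, p.2))
    (hM₂ : ∀ p : ℕ × ℕ, p ≠ (0,0) → M₂ (v p) = v (p.1, p.2 + 1))
    -- the action of the adjoints on the monomial basis
    (hadj₁ : (∀ m n : ℕ, (m, n) ≠ (0, 0) →
        ContinuousLinearMap.adjoint M₁ (v (m + 1, n)) =
          ((((m : ℝ) + 1) / (lam + m) : ℝ) : ℂ) • v (m, n)) ∧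
      ContinuousLinearMap.adjoint M₁ (v (1, 0)) = 0 ∧
      ∀ n : ℕ, ContinuousLinearMap.adjoint M₁ (v (0, n + 1)) = 0)
    (hadj₂ : (∀ m n : ℕ, (m, n) ≠ (0, 0) →
        ContinuousLinearMap.adjoint M₂ (v (m, n + 1)) =
          ((((n : ℝ) + 1) / (mu + n) : ℝ) : ℂ) • v (m, n)) ∧
      ContinuousLinearMap.adjoint M₂ (v (0, 1)) = 0 ∧
      ∀ m : ℕ, ContinuousLinearMap.adjoint M₂ (v (m + 1, 0)) = 0) :
    LinearMap.ker (ContinuousLinearMap.adjoint M₁ : H →ₗ[ℂ] H) ⊓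
        LinearMap.ker (ContinuousLinearMap.adjoint M₂ : H →ₗ[ℂ] H) =
      Submodule.span ℂ {v (1, 0), v (0, 1)} := by
  set K := Submodule.span ℂ {v (1, 0), v (0, 1)}
  set W := Submodule.span ℂ (v '' {p : ℕ × ℕ | 2 ≤ p.1 + p.2})
  have : FiniteDimensional ℂ K := FiniteDimensional.span_of_finite ℂ (Set.toFinite _)
  have hKW : K ⟂ W := by
    refine Submodule.isOrtho_span.mpr ?_
    rintro _ hu _ ⟨⟨m, n⟩, hp, rfl⟩
    simp only [Set.mem_ofPred_eq] at hp
    rcases hu with rfl | rfl <;> exact horth _ _ (by simp) (by simp; omega) (by simp; omega)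
  have hdense' : Dense ((K ⊔ W : Submodule ℂ H) : Set H) := by
    rwa [← Submodule.span_union, ← Set.image_pair, ← Set.image_union, ← setOf_ne_zero_eq_pair_union_two_le]
  have hWle : W ≤ LinearMap.range (M₁ : H →ₗ[ℂ] H) ⊔ LinearMap.range (M₂ : H →ₗ[ℂ] H) := by
    rw [Submodule.span_le]
    rintro _ ⟨⟨_ | m, n⟩, hp, rfl⟩
    · obtain ⟨k, rfl⟩ : ∃ k, n = k + 2 := ⟨n - 2, by simp at hp; omega⟩
      exact Submodule.mem_sup_right ⟨v (0, k + 1), hM₂ (0, k + 1) (by simp)⟩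
    · exact Submodule.mem_sup_left ⟨v (m, n), hM₁ (m, n) (by simp at hp ⊢; omega)⟩
  apply le_antisymm
  · calc _ = _ := M₁.ker_adjoint_inf_ker_adjoint M₂
      _ ≤ Wᗮ := Submodule.orthogonal_le hWle
      _ = K := Submodule.orthogonal_eq_of_isOrtho_of_dense_sup hKW hdense'
  · rw [Submodule.span_le]
    rintro _ (rfl | rfl)
    · exact ⟨hadj₁.2.1, hadj₂.2.2 0⟩
    · exact ⟨hadj₁.2.2 0, hadj₂.2.1⟩

/-- In `H₀^{(λ,μ)}(𝔻²)` the joint kernel `ker M₁* ∩ ker M₂*` of the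
adjoints of the two coordinate multiplications is the two-dimensional span of
`z₁` and `z₂`. -/
theorem stmt10 (lam mu : ℝ) (hlam : 0 < lam) (hmu : 0 < mu)
    (H : Type*) [NormedAddCommGroup H] [InnerProductSpace ℂ H] [CompleteSpace H]
    -- v (m,n) represents the monomial z₁^m z₂^n, for (m,n) ≠ (0,0)
    (v : ℕ × ℕ → H)
    (horth : ∀ p q : ℕ × ℕ, p ≠ (0,0) → q ≠ (0,0) → p ≠ q →
      (inner ℂ (v p) (v q) : ℂ) = 0)
    (hnorm : ∀ p : ℕ × ℕ, p ≠ (0,0) → ‖v p‖ ^ 2 = wt lam p.1 * wt mu p.2)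
    (hdense : Dense ((Submodule.span ℂ (v '' {p | p ≠ (0,0)}) : Submodule ℂ H) : Set H))
    -- M₁, M₂ are the multiplications by z₁, z₂
    (M₁ M₂ : H →L[ℂ] H)
    (hM₁ : ∀ p : ℕ × ℕ, p ≠ (0,0) → M₁ (v p) = v (p.1 + 1, p.2))
    (hM₂ : ∀ p : ℕ × ℕ, p ≠ (0,0) → M₂ (v p) = v (p.1, p.2 + 1))
    -- the action of the adjoints on the monomial basis
    (hadj₁ : (∀ m n : ℕ, (m, n) ≠ (0, 0) →
        ContinuousLinearMap.adjoint M₁ (v (m + 1, n)) =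
          ((((m : ℝ) + 1) / (lam + m) : ℝ) : ℂ) • v (m, n)) ∧
      ContinuousLinearMap.adjoint M₁ (v (1, 0)) = 0 ∧
      ∀ n : ℕ, ContinuousLinearMap.adjoint M₁ (v (0, n + 1)) = 0)
    (hadj₂ : (∀ m n : ℕ, (m, n) ≠ (0, 0) →
        ContinuousLinearMap.adjoint M₂ (v (m, n + 1)) =
          ((((n : ℝ) + 1) / (mu + n) : ℝ) : ℂ) • v (m, n)) ∧
      ContinuousLinearMap.adjoint M₂ (v (0, 1)) = 0 ∧
      ∀ m : ℕ, ContinuousLinearMap.adjoint M₂ (v (m + 1, 0)) = 0) :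
    LinearMap.ker (ContinuousLinearMap.adjoint M₁ : H →ₗ[ℂ] H) ⊓
        LinearMap.ker (ContinuousLinearMap.adjoint M₂ : H →ₗ[ℂ] H) =
      Submodule.span ℂ {v (1, 0), v (0, 1)} :=
  stmt10_general lam mu H v horth hdense M₁ M₂ hM₁ hM₂ hadj₁ hadj₂
end

section
/- Let T = (T₁,…,T_m) be a commuting tuple of bounded operators on a Hilbert space H and w₀ ∈ ℂ^m. Let D_{(T−w)*} : H → H^m be the column operator f ↦ ((T_j − w_j)* f)_j, and suppose it has closed range at w₀. Let R(w₀) be the (Moore–Penrose type) operator satisfying R(w₀) D_{(T−w₀)*} = I − P_{ker D_{(T−w₀)*}} and D_{(T−w₀)*} R(w₀) = P_{ran D_{(T−w₀)*}}. Then for every w with ‖w − w₀‖ < ‖R(w₀)‖^{−1}, writing 𝔓₀ for the orthogonal projection onto ran D_{(T−w₀)*}, one has 𝔓₀ D_{(T−w)*} = D_{(T−w₀)*} (I − R(w₀) D_{w̄−w̄₀}), where D_{w̄−w̄₀} : H^m → H, (f_j) ↦ Σ_j (w̄_j − w̄₀ⱼ) f_j; in particular, since I − R(w₀) D_{w̄−w̄₀}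 is invertible, dim ker 𝔓₀ D_{(T−w)*} = dim ker D_{(T−w₀)*} is constant on this ball. -/
/-!
Subtracting `D_{(T−w₀)*}` from `D_{(T−w)*}` leaves the multiplication operator
`−D_{w̄−w̄₀}`, whose norm is at most `‖w − w₀‖`. Since `𝔓₀` fixes `ran D_{(T−w₀)*}` and
`𝔓₀ = D_{(T−w₀)*} R`, this gives the factorization `𝔓₀ D_{(T−w)*} = D_{(T−w₀)*}(I − R D_{w̄−w̄₀})`.
On the ball `‖R D_{w̄−w̄₀}‖ ≤ ‖R‖ ‖w − w₀‖ < 1`, so the second factor is invertible by the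
Neumann series, and composing with an invertible operator on the right does not change the
dimension of the kernel.
-/

open ContinuousLinearMap

section OrthogonalProjection

variable {𝕜 E : Type*} [RCLike 𝕜] [NormedAddCommGroup E] [InnerProductSpace 𝕜 E]

theorem Submodule.apply_eq_self_of_mem_of_sub_mem_orthogonal {K : Submodule 𝕜 E} {P : E → E}
    (hP : ∀ g, P g ∈ K ∧ g - P g ∈ Kᗮ) {g : E} (hg : g ∈ K) : P g = g := by
  have hzero : g - P g ∈ K ⊓ Kᗮ := ⟨K.sub_mem hg (hP g).1, (hP g).2⟩
  rw [K.inf_orthogonal_eq_bot, Submodule.mem_bot, sub_eq_zero] at hzero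
  exact hzero.symm

end OrthogonalProjection

section ColumnOperator

variable {𝕜 E : Type*} [RCLike 𝕜] [NormedAddCommGroup E] [NormedSpace 𝕜 E] {ι : Type*} [Fintype ι]

theorem norm_apply_eq_of_apply_eq_conj_smul (L : E →L[𝕜] PiLp 2 fun _ : ι => E)
    (u : EuclideanSpace 𝕜 ι) (hL : ∀ f j, L f j = (starRingEnd 𝕜) (u j) • f) (f : E) :
    ‖L f‖ = ‖u‖ * ‖f‖ := by
  have hsq : ‖L f‖ ^ 2 = (‖u‖ * ‖f‖) ^ 2 := by
    rw [PiLp.norm_sq_eq_of_L2, mul_pow, PiLp.norm_sq_eq_of_L2, Finset.sum_mul]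
    refine Finset.sum_congr rfl fun j _ => ?_
    rw [hL, norm_smul, RCLike.norm_conj, mul_pow]
  exact (pow_left_inj₀ (norm_nonneg _) (by positivity) two_ne_zero).1 hsq

theorem opNorm_le_of_apply_eq_conj_smul (L : E →L[𝕜] PiLp 2 fun _ : ι => E)
    (u : EuclideanSpace 𝕜 ι) (hL : ∀ f j, L f j = (starRingEnd 𝕜) (u j) • f) : ‖L‖ ≤ ‖u‖ :=
  opNorm_le_bound _ (norm_nonneg u) fun f => (norm_apply_eq_of_apply_eq_conj_smul L u hL f).le

end ColumnOperator

section Perturbation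

variable {𝕜 E F : Type*} [RCLike 𝕜] [NormedAddCommGroup E] [NormedSpace 𝕜 E]
  [NormedAddCommGroup F] [NormedSpace 𝕜 F]

theorem comp_sub_eq_comp_id_sub_comp {A B : E →L[𝕜] F} {P : F →L[𝕜] F} {R : F →L[𝕜] E}
    (hPA : P ∘L A = A) (hAR : A ∘L R = P) :
    P ∘L (A - B) = A ∘L (ContinuousLinearMap.id 𝕜 E - R ∘L B) := by
  rw [comp_sub, comp_sub, comp_id, ← comp_assoc, hAR, hPA]

theorem norm_comp_lt_one_of_lt_inv {R : F →L[𝕜] E} {B : E →L[𝕜] F} {r : ℝ} (hB : ‖B‖ ≤ r)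
    (hr : r < ‖R‖⁻¹) : ‖R ∘L B‖ < 1 := by
  have hR : 0 < ‖R‖ := inv_pos.1 ((norm_nonneg B).trans hB |>.trans_lt hr)
  calc ‖R ∘L B‖ ≤ ‖R‖ * r := (opNorm_comp_le R B).trans (by gcongr)
    _ < 1 := (lt_div_iff₀' hR).1 (by rwa [one_div])

theorem rank_ker_comp_unit (A : E →L[𝕜] F) (S : (E →L[𝕜] E)ˣ) :
    Module.rank 𝕜 (LinearMap.ker (A ∘L (S : E →L[𝕜] E) : E →ₗ[𝕜] F)) =
      Module.rank 𝕜 (LinearMap.ker (A : E →ₗ[𝕜] F)) := by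
  let e : E ≃L[𝕜] E := ContinuousLinearEquiv.ofUnit S
  change Module.rank 𝕜 (LinearMap.ker ((A : E →ₗ[𝕜] F) ∘ₗ ((e : E ≃ₗ[𝕜] E) : E →ₗ[𝕜] E))) = _
  rw [LinearMap.ker_comp, Submodule.comap_equiv_eq_map_symm, LinearEquiv.rank_map_eq]

end Perturbation

theorem stmt14_general {m : ℕ}
    (H : Type*) [NormedAddCommGroup H] [InnerProductSpace ℂ H] [CompleteSpace H]
    (T : Fin m → H →L[ℂ] H)
    (w₀ : EuclideanSpace ℂ (Fin m))
    -- the column operators D_{(T−w)*}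
    (D : EuclideanSpace ℂ (Fin m) → H →L[ℂ] (PiLp 2 fun _ : Fin m => H))
    (hD : ∀ w f j, D w f j = ContinuousLinearMap.adjoint (T j) f
      - (starRingEnd ℂ) (w j) • f)
    -- the orthogonal projection 𝔓₀ onto ran D_{(T−w₀)*}
    (P₀ : (PiLp 2 fun _ : Fin m => H) →L[ℂ] (PiLp 2 fun _ : Fin m => H))
    (hP₀ : ∀ g, P₀ g ∈ LinearMap.range (D w₀ : H →ₗ[ℂ] PiLp 2 fun _ : Fin m => H) ∧
      g - P₀ g ∈ (LinearMap.range (D w₀ : H →ₗ[ℂ] PiLp 2 fun _ : Fin m => H) : Submodule ℂ _)ᗮ)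
    -- the generalized (Moore–Penrose type) inverse R of D_{(T−w₀)*}
    (R : (PiLp 2 fun _ : Fin m => H) →L[ℂ] H)
    (hR₂ : ∀ g, D w₀ (R g) = P₀ g)
    -- the operators D_{w̄−w̄₀}
    (Dbar : EuclideanSpace ℂ (Fin m) → H →L[ℂ] (PiLp 2 fun _ : Fin m => H))
    (hDbar : ∀ u f j, Dbar u f j = (starRingEnd ℂ) (u j) • f)
    (w : EuclideanSpace ℂ (Fin m)) (hw : ‖w - w₀‖ < ‖R‖⁻¹) :
    P₀ ∘L D w = D w₀ ∘L (ContinuousLinearMap.id ℂ H - R ∘L Dbar (w - w₀)) ∧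
    Module.rank ℂ (LinearMap.ker (P₀ ∘L D w : H →ₗ[ℂ] PiLp 2 fun _ : Fin m => H)) =
      Module.rank ℂ (LinearMap.ker (D w₀ : H →ₗ[ℂ] PiLp 2 fun _ : Fin m => H)) := by
  have hsplit : D w = D w₀ - Dbar (w - w₀) := by
    ext f j
    simp only [sub_apply, PiLp.sub_apply, hD, hDbar, map_sub, sub_smul]
    abel
  have hPD : P₀ ∘L D w₀ = D w₀ := ext fun f =>
    Submodule.apply_eq_self_of_mem_of_sub_mem_orthogonal hP₀ ⟨f, rfl⟩
  have hDR : D w₀ ∘L R = P₀ := ext hR₂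
  have hfactor := hsplit ▸ comp_sub_eq_comp_id_sub_comp (B := Dbar (w - w₀)) hPD hDR
  have hsmall : ‖R ∘L Dbar (w - w₀)‖ < 1 :=
    norm_comp_lt_one_of_lt_inv (opNorm_le_of_apply_eq_conj_smul _ _ (hDbar _)) hw
  refine ⟨hfactor, ?_⟩
  rw [hfactor, ← one_def, ← Units.val_oneSub _ hsmall]
  exact rank_ker_comp_unit _ _

/-- Let `T = (T₁,…,T_m)` be a commuting tuple of bounded operators on a
Hilbert space `H` and `w₀ ∈ ℂ^m`.  Suppose the column operator
`D_{(T−w₀)*} : f ↦ ((T_j − w₀ⱼ)* f)_j` has closed range, and `R` is its generalized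
inverse, satisfying `R D_{(T−w₀)*} = I − P_{ker}` and `D_{(T−w₀)*} R = 𝔓₀`, where
`P_ker` and `𝔓₀` are the orthogonal projections onto `ker D_{(T−w₀)*}` and
`ran D_{(T−w₀)*}`.  Then for `‖w − w₀‖ < ‖R‖⁻¹` one has
`𝔓₀ D_{(T−w)*} = D_{(T−w₀)*}(I − R D_{w̄−w̄₀})`, and the dimension of
`ker 𝔓₀ D_{(T−w)*}` equals that of `ker D_{(T−w₀)*}`. -/
theorem stmt14 {m : ℕ}
    (H : Type*) [NormedAddCommGroup H] [InnerProductSpace ℂ H] [CompleteSpace H]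
    (T : Fin m → H →L[ℂ] H)
    (hcomm : ∀ i j, T i ∘L T j = T j ∘L T i)
    (w₀ : EuclideanSpace ℂ (Fin m))
    -- the column operators D_{(T−w)*}
    (D : EuclideanSpace ℂ (Fin m) → H →L[ℂ] (PiLp 2 fun _ : Fin m => H))
    (hD : ∀ w f j, D w f j = ContinuousLinearMap.adjoint (T j) f
      - (starRingEnd ℂ) (w j) • f)
    -- closed range at w₀
    (hclosed : IsClosed ((LinearMap.range (D w₀ : H →ₗ[ℂ] PiLp 2 fun _ : Fin m => H) : Submodule ℂ _) :
      Set (PiLp 2 fun _ : Fin m => H)))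
    -- the orthogonal projection onto ker D_{(T−w₀)*}
    (Pker : H →L[ℂ] H)
    (hPker : ∀ f, Pker f ∈ LinearMap.ker (D w₀ : H →ₗ[ℂ] PiLp 2 fun _ : Fin m => H) ∧
      f - Pker f ∈ (LinearMap.ker (D w₀ : H →ₗ[ℂ] PiLp 2 fun _ : Fin m => H) : Submodule ℂ H)ᗮ)
    -- the orthogonal projection 𝔓₀ onto ran D_{(T−w₀)*}
    (P₀ : (PiLp 2 fun _ : Fin m => H) →L[ℂ] (PiLp 2 fun _ : Fin m => H))
    (hP₀ : ∀ g, P₀ g ∈ LinearMap.range (D w₀ : H →ₗ[ℂ] PiLp 2 fun _ : Fin m => H) ∧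
      g - P₀ g ∈ (LinearMap.range (D w₀ : H →ₗ[ℂ] PiLp 2 fun _ : Fin m => H) : Submodule ℂ _)ᗮ)
    -- the generalized (Moore–Penrose type) inverse R of D_{(T−w₀)*}
    (R : (PiLp 2 fun _ : Fin m => H) →L[ℂ] H)
    (hR₁ : ∀ f, R (D w₀ f) = f - Pker f)
    (hR₂ : ∀ g, D w₀ (R g) = P₀ g)
    -- the operators D_{w̄−w̄₀}
    (Dbar : EuclideanSpace ℂ (Fin m) → H →L[ℂ] (PiLp 2 fun _ : Fin m => H))
    (hDbar : ∀ u f j, Dbar u f j = (starRingEnd ℂ) (u j) • f)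
    (w : EuclideanSpace ℂ (Fin m)) (hw : ‖w - w₀‖ < ‖R‖⁻¹) :
    P₀ ∘L D w = D w₀ ∘L (ContinuousLinearMap.id ℂ H - R ∘L Dbar (w - w₀)) ∧
    Module.rank ℂ (LinearMap.ker (P₀ ∘L D w : H →ₗ[ℂ] PiLp 2 fun _ : Fin m => H)) =
      Module.rank ℂ (LinearMap.ker (D w₀ : H →ₗ[ℂ] PiLp 2 fun _ : Fin m => H)) :=
  stmt14_general H T w₀ D hD P₀ hP₀ R hR₂ Dbar hDbar w hw
end

section
/- Let H²₀(𝔻²) = {f ∈ H²(𝔻²) : f(0,0) = 0} be the submodule of the Hardy space of the bidisk, a Hilbert module over ℂ[z₁,z₂] via multiplication operators M₁, M₂. Then the dimension of the joint kernel ⋂_{j=1,2} ker(M_j − w_j)* equals 1 for w ≠ (0,0) in 𝔻², and equals 2 for w = (0,0) (where it is spanned by z₁ and z₂). -/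
/-!
Write `c p = ⟪z^p, x⟫` for the coefficients of `x ∈ H²₀(𝔻²)`. Since `M_j` shifts the monomial
basis, `x` lies in the joint kernel iff `c (p + e_j) = conj w_j * c p` for all `p ≠ (0,0)`.
For `w ≠ 0` the two recurrences meet at `(1,1)`, giving `conj w₁ * c (0,1) = conj w₂ * c (1,0)`,
so `c p = t * conj w^p` for a single scalar `t`: the joint kernel is spanned by the reproducing
kernel `K₀(·, w)`, whose coefficients are square summable because `w ∈ 𝔻²`. For `w = 0` the
recurrences say that `c` vanishes on every shift of a nonzero index, i.e. everywhere except at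
`(1,0)` and `(0,1)`.
-/

open ContinuousLinearMap Submodule
open scoped InnerProductSpace ComplexConjugate

namespace HilbertBasis

variable {ι 𝕜 H : Type*} [RCLike 𝕜] [NormedAddCommGroup H] [InnerProductSpace 𝕜 H]
  (b : HilbertBasis ι 𝕜 H)

theorem ext_inner {x y : H} (h : ∀ i, ⟪b i, x⟫_𝕜 = ⟪b i, y⟫_𝕜) : x = y :=
  b.repr.injective <| lp.ext <| funext fun i => by simp only [b.repr_apply_apply, h]

theorem exists_inner_eq {f : ι → 𝕜} (hf : Summable fun i => ‖f i‖ ^ 2) :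
    ∃ x, ∀ i, ⟪b i, x⟫_𝕜 = f i := by
  have hf₂ : Memℓp f 2 := memℓp_gen (by simpa using hf)
  exact ⟨b.repr.symm ⟨f, hf₂⟩, fun i => by rw [← b.repr_apply_apply]; simp⟩

theorem mem_span_image_iff {s : Finset ι} {x : H} :
    x ∈ span 𝕜 (b '' s) ↔ ∀ i ∉ s, ⟪b i, x⟫_𝕜 = 0 := by
  constructor
  · intro hx i hi
    refine mem_orthogonal_singleton_iff_inner_right.1 (span_le.2 ?_ hx)
    rintro _ ⟨j, hj, rfl⟩
    exact mem_orthogonal_singleton_iff_inner_right.2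
      (b.orthonormal.2 fun hij => hi (hij ▸ hj))
  · intro h
    have hx : x = ∑ i ∈ s, b.repr x i • b i :=
      (b.hasSum_repr x).unique <| hasSum_sum_of_ne_finset_zero fun i hi => by
        rw [b.repr_apply_apply, h i hi, zero_smul]
    rw [hx]
    exact sum_mem fun i hi => smul_mem _ _ (subset_span ⟨i, hi, rfl⟩)

variable [CompleteSpace H]

noncomputable def mkImage {v : ι → H} {S : Set ι} (hv : Orthonormal 𝕜 fun i : S => v i)
    (hS : Dense (span 𝕜 (v '' S) : Set H)) : HilbertBasis S 𝕜 H :=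
  HilbertBasis.mk hv <| by rw [← Set.image_eq_range, dense_iff_topologicalClosure_eq_top.1 hS]

@[simp]
theorem mkImage_apply {v : ι → H} {S : Set ι} (hv : Orthonormal 𝕜 fun i : S => v i)
    (hS : Dense (span 𝕜 (v '' S) : Set H)) (i : S) : mkImage hv hS i = v i :=
  congrFun (HilbertBasis.coe_mk hv _) i

theorem adjoint_sub_smul_apply_eq_zero_iff {M : H →L[𝕜] H} {σ : ι → ι}
    (hM : ∀ i, M (b i) = b (σ i)) (w : 𝕜) (x : H) :
    adjoint (M - w • 1) x = 0 ↔ ∀ i, ⟪b (σ i), x⟫_𝕜 = conj w * ⟪b i, x⟫_𝕜 := by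
  have hcoeff : ∀ i, ⟪b i, adjoint (M - w • 1) x⟫_𝕜 = ⟪b (σ i), x⟫_𝕜 - conj w * ⟪b i, x⟫_𝕜 :=
    fun i => by
      rw [adjoint_inner_right, sub_apply, smul_apply, one_apply_eq_self, hM, inner_sub_left,
        inner_smul_left]
  constructor
  · intro h i
    rw [← sub_eq_zero, ← hcoeff, h, inner_zero_right]
  · intro h
    exact b.ext_inner fun i => by rw [hcoeff, h, sub_self, inner_zero_right]

end HilbertBasis

theorem Orthonormal.finrank_span_pair {𝕜 E : Type*} [RCLike 𝕜] [NormedAddCommGroup E]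
    [InnerProductSpace 𝕜 E] {u₁ u₂ : E} (h : Orthonormal 𝕜 ![u₁, u₂]) :
    Module.finrank 𝕜 (span 𝕜 {u₁, u₂}) = 2 := by
  rw [← Matrix.range_cons_cons_empty u₁ u₂ ![], finrank_span_eq_card h.linearIndependent,
    Fintype.card_fin]

theorem summable_norm_pow_mul_pow_sq {𝕜 : Type*} [NormedField 𝕜] {a₁ a₂ : 𝕜} (h₁ : ‖a₁‖ < 1)
    (h₂ : ‖a₂‖ < 1) : Summable fun p : ℕ × ℕ => ‖a₁ ^ p.1 * a₂ ^ p.2‖ ^ 2 := by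
  have hgeom {a : 𝕜} (h : ‖a‖ < 1) : Summable fun n : ℕ => (‖a‖ ^ 2) ^ n :=
    summable_geometric_of_lt_one (by positivity) (by nlinarith [norm_nonneg a])
  refine ((hgeom h₁).mul_of_nonneg (hgeom h₂) (fun _ => by positivity)
    (fun _ => by positivity)).congr fun p => ?_
  simp only [norm_mul, norm_pow]
  ring

section ShiftRecurrence

variable {K : Type*} [Field K] {a₁ a₂ : K} {c : ℕ × ℕ → K}

theorem eq_pow_mul_pow_mul_of_shift_eq (h₁ : ∀ p ≠ (0, 0), c (p.1 + 1, p.2) = a₁ * c p)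
    (h₂ : ∀ p ≠ (0, 0), c (p.1, p.2 + 1) = a₂ * c p) {t : K}
    (ht₁ : c (1, 0) = a₁ * t) (ht₂ : c (0, 1) = a₂ * t) :
    ∀ p ≠ (0, 0), c p = a₁ ^ p.1 * a₂ ^ p.2 * t := by
  have hcol : ∀ n, c (0, n + 1) = a₂ ^ (n + 1) * t := by
    intro n
    induction n with
    | zero => simpa using ht₂
    | succ n ih => rw [h₂ (0, n + 1) (by simp), ih]; ring
  have hrow : ∀ m n, c (m + 1, n) = a₁ ^ (m + 1) * a₂ ^ n * t := by
    intro m n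
    induction n with
    | zero =>
      induction m with
      | zero => simpa using ht₁
      | succ m ih => rw [h₁ (m + 1, 0) (by simp), ih]; ring
    | succ n ih => rw [h₂ (m + 1, n) (by simp), ih]; ring
  rintro ⟨_ | m, _ | n⟩ hp
  · exact absurd rfl hp
  · simpa using hcol n
  · simpa using hrow m 0
  · simpa using hrow m (n + 1)

theorem exists_eq_pow_mul_pow_mul_of_shift_eq (ha : (a₁, a₂) ≠ (0, 0))
    (h₁ : ∀ p ≠ (0, 0), c (p.1 + 1, p.2) = a₁ * c p)
    (h₂ : ∀ p ≠ (0, 0), c (p.1, p.2 + 1) = a₂ * c p) :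
    ∃ t, ∀ p ≠ (0, 0), c p = a₁ ^ p.1 * a₂ ^ p.2 * t := by
  have hc₁₁ : a₁ * c (0, 1) = a₂ * c (1, 0) :=
    (h₁ (0, 1) (by simp)).symm.trans (h₂ (1, 0) (by simp))
  by_cases ha₁ : a₁ = 0
  · have ha₂ : a₂ ≠ 0 := fun ha₂ => ha (by simp [ha₁, ha₂])
    refine ⟨c (0, 1) / a₂, eq_pow_mul_pow_mul_of_shift_eq h₁ h₂ ?_ ?_⟩
    · field_simp; linear_combination -hc₁₁
    · field_simp
  · refine ⟨c (1, 0) / a₁, eq_pow_mul_pow_mul_of_shift_eq h₁ h₂ ?_ ?_⟩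
    · field_simp
    · field_simp; linear_combination hc₁₁

theorem exists_nonzero_shift_eq_iff (q : ℕ × ℕ) :
    (∃ p ≠ (0, 0), q = (p.1 + 1, p.2) ∨ q = (p.1, p.2 + 1)) ↔
      q ∉ ({(0, 0), (1, 0), (0, 1)} : Set (ℕ × ℕ)) := by
  obtain ⟨m, n⟩ := q
  constructor
  · rintro ⟨⟨m', n'⟩, hp, h | h⟩ <;> simp_all [Prod.ext_iff]
  · intro hq
    simp only [Set.mem_insert_iff, Set.mem_singleton_iff, Prod.ext_iff, not_or] at hq
    rcases m with _ | m
    · exact ⟨(0, n - 1), by simp; omega, Or.inr (by simp; omega)⟩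
    · exact ⟨(m, n), by simp; omega, Or.inl rfl⟩

end ShiftRecurrence

section JointKernel

variable {ι 𝕜 H : Type*} [RCLike 𝕜] [NormedAddCommGroup H] [InnerProductSpace 𝕜 H]
  [CompleteSpace H]

noncomputable def jointAdjointKer (M₁ M₂ : H →L[𝕜] H) (w₁ w₂ : 𝕜) : Submodule 𝕜 H :=
  LinearMap.ker (adjoint (M₁ - w₁ • 1) : H →ₗ[𝕜] H) ⊓
    LinearMap.ker (adjoint (M₂ - w₂ • 1) : H →ₗ[𝕜] H)

theorem HilbertBasis.mem_jointAdjointKer_iff (b : HilbertBasis ι 𝕜 H) {M₁ M₂ : H →L[𝕜] H}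
    {σ₁ σ₂ : ι → ι} (hM₁ : ∀ i, M₁ (b i) = b (σ₁ i)) (hM₂ : ∀ i, M₂ (b i) = b (σ₂ i))
    {w₁ w₂ : 𝕜} {x : H} :
    x ∈ jointAdjointKer M₁ M₂ w₁ w₂ ↔
      (∀ i, ⟪b (σ₁ i), x⟫_𝕜 = conj w₁ * ⟪b i, x⟫_𝕜) ∧
        ∀ i, ⟪b (σ₂ i), x⟫_𝕜 = conj w₂ * ⟪b i, x⟫_𝕜 := by
  simp only [jointAdjointKer, mem_inf, LinearMap.mem_ker, coe_coe,
    b.adjoint_sub_smul_apply_eq_zero_iff hM₁, b.adjoint_sub_smul_apply_eq_zero_iff hM₂]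

end JointKernel

section Bidisk

variable {H : Type*} [NormedAddCommGroup H] [InnerProductSpace ℂ H] [CompleteSpace H]
  {v : ℕ × ℕ → H} {M₁ M₂ : H →L[ℂ] H}

theorem mem_jointAdjointKer_iff_inner_shift
    (horth : Orthonormal ℂ (fun p : {p : ℕ × ℕ // p ≠ (0,0)} => v p.1))
    (hdense : Dense ((span ℂ (v '' {p | p ≠ (0,0)}) : Submodule ℂ H) : Set H))
    (hM₁ : ∀ p : ℕ × ℕ, p ≠ (0,0) → M₁ (v p) = v (p.1 + 1, p.2))
    (hM₂ : ∀ p : ℕ × ℕ, p ≠ (0,0) → M₂ (v p) = v (p.1, p.2 + 1)) {w₁ w₂ : ℂ} {x : H} :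
    x ∈ jointAdjointKer M₁ M₂ w₁ w₂ ↔
      (∀ p ≠ (0, 0), ⟪v (p.1 + 1, p.2), x⟫_ℂ = conj w₁ * ⟪v p, x⟫_ℂ) ∧
        ∀ p ≠ (0, 0), ⟪v (p.1, p.2 + 1), x⟫_ℂ = conj w₂ * ⟪v p, x⟫_ℂ := by
  let b := HilbertBasis.mkImage (S := {p | p ≠ (0, 0)}) horth hdense
  rw [b.mem_jointAdjointKer_iff (σ₁ := fun i => ⟨(i.1.1 + 1, i.1.2), by simp⟩)
    (σ₂ := fun i => ⟨(i.1.1, i.1.2 + 1), by simp⟩) (fun i => by simpa [b] using hM₁ i i.2)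
    (fun i => by simpa [b] using hM₂ i i.2)]
  simp [b, Subtype.forall]

theorem jointAdjointKer_eq_span_singleton
    (horth : Orthonormal ℂ (fun p : {p : ℕ × ℕ // p ≠ (0,0)} => v p.1))
    (hdense : Dense ((span ℂ (v '' {p | p ≠ (0,0)}) : Submodule ℂ H) : Set H))
    (hM₁ : ∀ p : ℕ × ℕ, p ≠ (0,0) → M₁ (v p) = v (p.1 + 1, p.2))
    (hM₂ : ∀ p : ℕ × ℕ, p ≠ (0,0) → M₂ (v p) = v (p.1, p.2 + 1)) {w₁ w₂ : ℂ}
    (hw₁ : ‖w₁‖ < 1) (hw₂ : ‖w₂‖ < 1) (hw : (w₁, w₂) ≠ (0, 0)) :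
    ∃ ξ ≠ 0, jointAdjointKer M₁ M₂ w₁ w₂ = ℂ ∙ ξ := by
  let b := HilbertBasis.mkImage (S := {p | p ≠ (0, 0)}) horth hdense
  -- `ξ` is the reproducing kernel `K₀(·, w)`
  obtain ⟨ξ, hξ⟩ := b.exists_inner_eq (f := fun i => conj w₁ ^ i.1.1 * conj w₂ ^ i.1.2)
    ((summable_norm_pow_mul_pow_sq (by simpa) (by simpa)).subtype _)
  replace hξ : ∀ p ≠ (0, 0), ⟪v p, ξ⟫_ℂ = conj w₁ ^ p.1 * conj w₂ ^ p.2 :=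
    fun p hp => by simpa [b] using hξ ⟨p, hp⟩
  have hconj : (conj w₁, conj w₂) ≠ (0, 0) := by simpa [Prod.ext_iff] using hw
  refine ⟨ξ, ?_, le_antisymm ?_ ?_⟩
  · rintro rfl
    have h₁₀ := hξ (1, 0) (by simp)
    have h₀₁ := hξ (0, 1) (by simp)
    simp only [inner_zero_right, pow_one, pow_zero, mul_one, one_mul] at h₁₀ h₀₁
    exact hconj (by rw [← h₁₀, ← h₀₁])
  · intro x hx
    rw [mem_jointAdjointKer_iff_inner_shift horth hdense hM₁ hM₂] at hx
    obtain ⟨t, ht⟩ :=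
      exists_eq_pow_mul_pow_mul_of_shift_eq (c := fun p => ⟪v p, x⟫_ℂ) hconj hx.1 hx.2
    refine mem_span_singleton.2 ⟨t, b.ext_inner fun i => ?_⟩
    simp only [b, HilbertBasis.mkImage_apply, inner_smul_right, hξ i i.2, ht i i.2]
    ring
  · rw [span_singleton_le_iff_mem, mem_jointAdjointKer_iff_inner_shift horth hdense hM₁ hM₂]
    constructor <;> intro p hp <;> rw [hξ p hp, hξ _ (by simp)] <;> ring

theorem jointAdjointKer_zero_eq_span
    (horth : Orthonormal ℂ (fun p : {p : ℕ × ℕ // p ≠ (0,0)} => v p.1))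
    (hdense : Dense ((span ℂ (v '' {p | p ≠ (0,0)}) : Submodule ℂ H) : Set H))
    (hM₁ : ∀ p : ℕ × ℕ, p ≠ (0,0) → M₁ (v p) = v (p.1 + 1, p.2))
    (hM₂ : ∀ p : ℕ × ℕ, p ≠ (0,0) → M₂ (v p) = v (p.1, p.2 + 1)) :
    jointAdjointKer M₁ M₂ 0 0 = span ℂ {v (1, 0), v (0, 1)} := by
  let b := HilbertBasis.mkImage (S := {p | p ≠ (0, 0)}) horth hdense
  let s : Finset {p : ℕ × ℕ | p ≠ (0, 0)} := {⟨(1, 0), by simp⟩, ⟨(0, 1), by simp⟩}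
  have hs : b '' s = {v (1, 0), v (0, 1)} := by simp [b, s, Set.image_insert_eq]
  ext x
  rw [mem_jointAdjointKer_iff_inner_shift horth hdense hM₁ hM₂, ← hs, b.mem_span_image_iff]
  simp only [map_zero, zero_mul]
  constructor
  · rintro ⟨h₁, h₂⟩ i hi
    obtain ⟨p, hp, hq | hq⟩ := (exists_nonzero_shift_eq_iff i).2 <| by
      simp only [s, Finset.mem_insert, Finset.mem_singleton, Subtype.ext_iff, not_or] at hi
      simp only [Set.mem_insert_iff, Set.mem_singleton_iff, not_or]
      exact ⟨i.2, hi⟩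
    · simpa [b, hq] using h₁ p hp
    · simpa [b, hq] using h₂ p hp
  · intro h
    have h' {q : ℕ × ℕ} (hq : ∃ p ≠ (0, 0), q = (p.1 + 1, p.2) ∨ q = (p.1, p.2 + 1)) :
        ⟪v q, x⟫_ℂ = 0 := by
      simp only [exists_nonzero_shift_eq_iff, Set.mem_insert_iff, Set.mem_singleton_iff,
        not_or] at hq
      simpa [b] using h ⟨q, hq.1⟩ (by simpa [s, Subtype.ext_iff] using hq.2)
    exact ⟨fun p hp => h' ⟨p, hp, Or.inl rfl⟩, fun p hp => h' ⟨p, hp, Or.inr rfl⟩⟩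

end Bidisk

/-- Let `H²₀(𝔻²) = {f ∈ H²(𝔻²) : f(0,0) = 0}`, with orthonormal basis
the monomials `z₁^m z₂^n`, `(m,n) ≠ (0,0)`, and multiplications `M₁`, `M₂` by the
coordinates.  Then for `w = (w₁,w₂) ∈ 𝔻²`, the joint kernel
`⋂_{j=1,2} ker (M_j − w_j)*` has dimension `1` if `w ≠ (0,0)` and dimension `2` at
`w = (0,0)`, where it is spanned by `z₁` and `z₂`. -/
theorem stmt18
    (H : Type*) [NormedAddCommGroup H] [InnerProductSpace ℂ H] [CompleteSpace H]
    -- v (m,n) represents the monomial z₁^m z₂^n, for (m,n) ≠ (0,0)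
    (v : ℕ × ℕ → H)
    (horth : Orthonormal ℂ (fun p : {p : ℕ × ℕ // p ≠ (0,0)} => v p.1))
    (hdense : Dense ((Submodule.span ℂ (v '' {p | p ≠ (0,0)}) : Submodule ℂ H) : Set H))
    -- M₁, M₂ are the multiplications by z₁, z₂
    (M₁ M₂ : H →L[ℂ] H)
    (hM₁ : ∀ p : ℕ × ℕ, p ≠ (0,0) → M₁ (v p) = v (p.1 + 1, p.2))
    (hM₂ : ∀ p : ℕ × ℕ, p ≠ (0,0) → M₂ (v p) = v (p.1, p.2 + 1))
    (w₁ w₂ : ℂ) (hw₁ : ‖w₁‖ < 1) (hw₂ : ‖w₂‖ < 1) :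
    ((w₁, w₂) ≠ (0, 0) →
      Module.finrank ℂ
        (LinearMap.ker ((ContinuousLinearMap.adjoint (M₁ - w₁ • (1 : H →L[ℂ] H)) : H →ₗ[ℂ] H)) ⊓
          LinearMap.ker ((ContinuousLinearMap.adjoint (M₂ - w₂ • (1 : H →L[ℂ] H)) : H →ₗ[ℂ] H)) :
          Submodule ℂ H) = 1) ∧
    ((w₁, w₂) = (0, 0) →
      (LinearMap.ker ((ContinuousLinearMap.adjoint (M₁ - w₁ • (1 : H →L[ℂ] H)) : H →ₗ[ℂ] H)) ⊓
          LinearMap.ker ((ContinuousLinearMap.adjoint (M₂ - w₂ • (1 : H →L[ℂ] H)) : H →ₗ[ℂ] H)) :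
          Submodule ℂ H) = Submodule.span ℂ {v (1, 0), v (0, 1)} ∧
      Module.finrank ℂ
        (LinearMap.ker ((ContinuousLinearMap.adjoint (M₁ - w₁ • (1 : H →L[ℂ] H)) : H →ₗ[ℂ] H)) ⊓
          LinearMap.ker ((ContinuousLinearMap.adjoint (M₂ - w₂ • (1 : H →L[ℂ] H)) : H →ₗ[ℂ] H)) :
          Submodule ℂ H) = 2) := by
  refine ⟨fun hw => ?_, fun hw => ?_⟩
  · obtain ⟨ξ, hξ, hker⟩ := jointAdjointKer_eq_span_singleton horth hdense hM₁ hM₂ hw₁ hw₂ hw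
    exact (LinearEquiv.ofEq _ _ hker).finrank_eq.trans (finrank_span_singleton hξ)
  · obtain ⟨rfl, rfl⟩ := Prod.ext_iff.1 hw
    have hker := jointAdjointKer_zero_eq_span horth hdense hM₁ hM₂
    have horth₂ : Orthonormal ℂ ![v (1, 0), v (0, 1)] := by
      convert horth.comp ![⟨(1, 0), by simp⟩, ⟨(0, 1), by simp⟩] (by decide) using 1
      ext i
      fin_cases i <;> rfl
    exact ⟨hker, (LinearEquiv.ofEq _ _ hker).finrank_eq.trans horth₂.finrank_span_pair⟩
end
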